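/- arXiv:1409.4381 — 4 statements merged into one kernel-verified Lean document; each statement's English description precedes it below -/
import Mathlib

section
/- Let λ > 0 and let f : ℝ → ℝ be integrable and continuous. Then the function T[f] is twice continuously differentiable on ℝ and satisfies (T[f])″(x) + 4λ²·T[f](x) = f(x) for all x ∈ ℝ. -/
/-!
Splitting the integral at `y = x`, the kernel `sin(ω|x − y|)` equals `± sin(ωx − ωy)`, so
`4λ · T[f](x) = sin(ωx) P(x) − cos(ωx) Q(x)` with `ω = 2λ`, where `P` and `Q` are the differences
`∫_{y ≤ x} − ∫_{y > x}` of `cos(ω·) f` and `sin(ω·) f`. These have derivatives `2 cos(ωx) f(x)` and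
`2 sin(ωx) f(x)`, which is exactly the variation-of-constants ansatz for `u'' + ω² u = f`.
-/

open MeasureTheory Real

/-- The operator `T` defined by `T[f](x) = (1/(4λ)) ∫_ℝ sin(2λ|x − y|) f(y) dy`. -/
noncomputable def opT (lam : ℝ) (f : ℝ → ℝ) (x : ℝ) : ℝ :=
  (1 / (4 * lam)) * ∫ y : ℝ, Real.sin (2 * lam * |x - y|) * f y

open Set

section Primitives

variable {E : Type*} [NormedAddCommGroup E] [NormedSpace ℝ E] [CompleteSpace E] {g : ℝ → E}

theorem hasDerivAt_setIntegral_Iic (hg : Integrable g) {x : ℝ} (hx : ContinuousAt g x) :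
    HasDerivAt (fun t => ∫ y in Iic t, g y) (g x) x := by
  have hsplit : (fun t => ∫ y in Iic t, g y) =
      fun t => (∫ y in Iic 0, g y) + ∫ y in 0..t, g y :=
    funext fun t => by
      rw [← intervalIntegral.integral_Iic_sub_Iic hg.integrableOn hg.integrableOn, add_sub_cancel]
  rw [hsplit]
  exact (intervalIntegral.integral_hasDerivAt_right hg.intervalIntegrable
    hg.aestronglyMeasurable.stronglyMeasurableAtFilter hx).const_add _

theorem hasDerivAt_setIntegral_Iic_sub_setIntegral_Ioi (hg : Integrable g) {x : ℝ}
    (hx : ContinuousAt g x) :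
    HasDerivAt (fun t => (∫ y in Iic t, g y) - ∫ y in Ioi t, g y) ((2 : ℝ) • g x) x := by
  have hsplit : (fun t => (∫ y in Iic t, g y) - ∫ y in Ioi t, g y) =
      fun t => (2 : ℝ) • (∫ y in Iic t, g y) - ∫ y, g y :=
    funext fun t => by
      rw [← intervalIntegral.integral_Iic_add_Ioi (b := t) hg.integrableOn hg.integrableOn,
        two_smul]
      abel
  rw [hsplit]
  exact ((hasDerivAt_setIntegral_Iic hg hx).const_smul (2 : ℝ)).sub_const _

end Primitives

section Kernel

variable {f : ℝ → ℝ}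

theorem MeasureTheory.Integrable.sin_comp_mul (hf : Integrable f) {a : ℝ → ℝ}
    (ha : Continuous a) : Integrable fun y => sin (a y) * f y :=
  hf.bdd_mul (c := 1) (continuous_sin.comp ha).aestronglyMeasurable
    (ae_of_all _ fun y => by simpa using abs_sin_le_one (a y))

theorem MeasureTheory.Integrable.cos_comp_mul (hf : Integrable f) {a : ℝ → ℝ}
    (ha : Continuous a) : Integrable fun y => cos (a y) * f y :=
  hf.bdd_mul (c := 1) (continuous_cos.comp ha).aestronglyMeasurable
    (ae_of_all _ fun y => by simpa using abs_cos_le_one (a y))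

variable (ω x : ℝ)

theorem setIntegral_sin_sub_mul (hf : Integrable f) (s : Set ℝ) :
    ∫ y in s, sin (ω * x - ω * y) * f y =
      sin (ω * x) * (∫ y in s, cos (ω * y) * f y) - cos (ω * x) * ∫ y in s, sin (ω * y) * f y := by
  rw [← integral_const_mul, ← integral_const_mul, ← integral_sub
    ((hf.cos_comp_mul (continuous_const_mul ω)).integrableOn.const_mul _)
    ((hf.sin_comp_mul (continuous_const_mul ω)).integrableOn.const_mul _)]
  congr 1 with y
  rw [sin_sub]
  ring

theorem integral_sin_mul_abs_sub_mul (hf : Integrable f) :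
    ∫ y, sin (ω * |x - y|) * f y =
      sin (ω * x) * ((∫ y in Iic x, cos (ω * y) * f y) - ∫ y in Ioi x, cos (ω * y) * f y) -
      cos (ω * x) * ((∫ y in Iic x, sin (ω * y) * f y) - ∫ y in Ioi x, sin (ω * y) * f y) := by
  have hint : Integrable fun y => sin (ω * |x - y|) * f y := hf.sin_comp_mul (by fun_prop)
  have hIic : ∫ y in Iic x, sin (ω * |x - y|) * f y =
      ∫ y in Iic x, sin (ω * x - ω * y) * f y :=
    setIntegral_congr_fun measurableSet_Iic fun y hy => by
      rw [abs_of_nonneg (sub_nonneg.2 hy), mul_sub]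
  have hIoi : ∫ y in Ioi x, sin (ω * |x - y|) * f y =
      -∫ y in Ioi x, sin (ω * x - ω * y) * f y := by
    rw [← integral_neg]
    refine setIntegral_congr_fun measurableSet_Ioi fun y hy => ?_
    rw [abs_of_neg (sub_neg.2 hy), ← neg_mul, ← sin_neg]
    ring_nf
  rw [← intervalIntegral.integral_Iic_add_Ioi hint.integrableOn hint.integrableOn, hIic, hIoi,
    setIntegral_sin_sub_mul ω x hf, setIntegral_sin_sub_mul ω x hf]
  ring

end Kernel

theorem contDiff_two_and_deriv_deriv_of_hasDerivAt {E : Type*} [NormedAddCommGroup E]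
    [NormedSpace ℝ E] {u v w : ℝ → E} (hu : ∀ x, HasDerivAt u (v x) x)
    (hv : ∀ x, HasDerivAt v (w x) x)
    (hw : Continuous w) : ContDiff ℝ 2 u ∧ deriv (deriv u) = w := by
  have hdu : deriv u = v := funext fun x => (hu x).deriv
  have hdv : deriv v = w := funext fun x => (hv x).deriv
  refine ⟨?_, by rw [hdu, hdv]⟩
  rw [show (2 : WithTop ℕ∞) = 1 + 1 by norm_num, contDiff_succ_iff_deriv, hdu,
    contDiff_one_iff_deriv, hdv]
  exact ⟨fun x => (hu x).differentiableAt, by simp, fun x => (hv x).differentiableAt, hw⟩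

theorem hasDerivAt_sin_mul (ω x : ℝ) :
    HasDerivAt (fun t => sin (ω * t)) (ω * cos (ω * x)) x := by
  simpa [mul_comm] using ((hasDerivAt_id x).const_mul ω).sin

theorem hasDerivAt_cos_mul (ω x : ℝ) :
    HasDerivAt (fun t => cos (ω * t)) (-(ω * sin (ω * x))) x := by
  simpa [mul_comm] using ((hasDerivAt_id x).const_mul ω).cos

section VariationOfParameters

/-- With `P' = 2 cos(ω·) f` and `Q' = 2 sin(ω·) f`, this is the variation-of-constants solution
of `u'' + ω² u = f`. -/
noncomputable def variationOfParameters (ω : ℝ) (P Q : ℝ → ℝ) (t : ℝ) : ℝ :=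
  (2 * ω)⁻¹ * (sin (ω * t) * P t - cos (ω * t) * Q t)

variable {ω : ℝ} {f P Q : ℝ → ℝ}

theorem hasDerivAt_variationOfParameters (hω : ω ≠ 0)
    (hP : ∀ x, HasDerivAt P (2 * (cos (ω * x) * f x)) x)
    (hQ : ∀ x, HasDerivAt Q (2 * (sin (ω * x) * f x)) x) (x : ℝ) :
    HasDerivAt (variationOfParameters ω P Q)
      (2⁻¹ * (cos (ω * x) * P x + sin (ω * x) * Q x)) x := by
  refine ((((hasDerivAt_sin_mul ω x).mul (hP x)).sub
    ((hasDerivAt_cos_mul ω x).mul (hQ x))).const_mul (2 * ω)⁻¹).congr_deriv ?_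
  field_simp
  ring

theorem hasDerivAt_cos_mul_add_sin_mul
    (hP : ∀ x, HasDerivAt P (2 * (cos (ω * x) * f x)) x)
    (hQ : ∀ x, HasDerivAt Q (2 * (sin (ω * x) * f x)) x) (x : ℝ) :
    HasDerivAt (fun t => 2⁻¹ * (cos (ω * t) * P t + sin (ω * t) * Q t))
      (f x - ω ^ 2 * variationOfParameters ω P Q x) x := by
  refine ((((hasDerivAt_cos_mul ω x).mul (hP x)).add
    ((hasDerivAt_sin_mul ω x).mul (hQ x))).const_mul 2⁻¹).congr_deriv ?_
  rw [variationOfParameters]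
  rcases eq_or_ne ω 0 with rfl | hω
  · linear_combination f x * sin_sq_add_cos_sq (0 * x)
  · field_simp
    linear_combination (2 * f x) * sin_sq_add_cos_sq (ω * x)

theorem contDiff_variationOfParameters_and_ode (hω : ω ≠ 0) (hf : Continuous f)
    (hP : ∀ x, HasDerivAt P (2 * (cos (ω * x) * f x)) x)
    (hQ : ∀ x, HasDerivAt Q (2 * (sin (ω * x) * f x)) x) :
    ContDiff ℝ 2 (variationOfParameters ω P Q) ∧ ∀ x,
      deriv (deriv (variationOfParameters ω P Q)) x + ω ^ 2 * variationOfParameters ω P Q x =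
        f x := by
  have hu := hasDerivAt_variationOfParameters hω hP hQ
  have hu_cont : Continuous (variationOfParameters ω P Q) :=
    continuous_iff_continuousAt.2 fun x => (hu x).continuousAt
  obtain ⟨hC2, hdd⟩ := contDiff_two_and_deriv_deriv_of_hasDerivAt hu
    (hasDerivAt_cos_mul_add_sin_mul hP hQ)
    (hf.sub (continuous_const.mul hu_cont))
  exact ⟨hC2, fun x => by rw [hdd]; ring⟩

end VariationOfParameters

/-- for `λ > 0` and `f` integrable and continuous, `T[f]` is twice
continuously differentiable and satisfies `(T[f])″(x) + 4λ²·T[f](x) = f(x)` for all `x`. -/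
theorem stmt_0 (lam : ℝ) (hlam : 0 < lam) (f : ℝ → ℝ)
    (hf : Integrable f) (hfc : Continuous f) :
    ContDiff ℝ 2 (opT lam f) ∧
      ∀ x : ℝ, deriv (deriv (opT lam f)) x + 4 * lam ^ 2 * opT lam f x = f x := by
  set ω := 2 * lam
  have hω : ω ≠ 0 := by positivity
  have hT : opT lam f = variationOfParameters ω
      (fun t => (∫ y in Iic t, cos (ω * y) * f y) - ∫ y in Ioi t, cos (ω * y) * f y)
      (fun t => (∫ y in Iic t, sin (ω * y) * f y) - ∫ y in Ioi t, sin (ω * y) * f y) := by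
    ext x
    rw [opT, integral_sin_mul_abs_sub_mul ω x hf, variationOfParameters]
    ring
  have hP x := hasDerivAt_setIntegral_Iic_sub_setIntegral_Ioi
    (hf.cos_comp_mul (continuous_const_mul ω)) (x := x) (by fun_prop)
  have hQ x := hasDerivAt_setIntegral_Iic_sub_setIntegral_Ioi
    (hf.sin_comp_mul (continuous_const_mul ω)) (x := x) (by fun_prop)
  simp only [smul_eq_mul] at hP hQ
  obtain ⟨hC2, hode⟩ := contDiff_variationOfParameters_and_ode hω hfc hP hQ
  rw [hT]
  exact ⟨hC2, fun x => by linear_combination hode x⟩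
end

section
/- Let λ > 0, let p : ℝ → ℝ be continuous, and let σ : ℝ → ℝ be integrable and continuous such that σ(x) = S[T[σ]](x) + p(x) for all x ∈ ℝ. Then δ := T[σ] is twice continuously differentiable and satisfies δ″(x) + 4λ²·δ(x) − (δ′(x))²/4 + 4λ²·(exp(δ(x)) − 1 − δ(x)) = p(x) for all x ∈ ℝ. -/
open MeasureTheory Real

/-- The operator `S` defined by `S[f](x) = (f′(x))²/4 − 4λ²·(exp(f(x)) − 1 − f(x))`. -/
noncomputable def opS (lam : ℝ) (f : ℝ → ℝ) (x : ℝ) : ℝ :=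
  (deriv f x) ^ 2 / 4 - 4 * lam ^ 2 * (Real.exp (f x) - 1 - f x)

/-!
Write `u(x) = ∫ sin(k|x − y|) σ(y) dy`. Since
`sin(k|x − y|) = ± (sin kx cos ky − cos kx sin ky)` with the sign of `x − y`, we get
`u = sin(kx) a(x) − cos(kx) b(x)`, where `a` and `b` are the signed integrals
`∫_{y<x} − ∫_{y>x}` of `cos(ky) σ(y)` and `sin(ky) σ(y)`. These have derivatives
`2 cos(kx) σ(x)` and `2 sin(kx) σ(x)`, and differentiating twice gives `u'' = −k² u + 2k σ`.
With `k = 2λ` and `T[σ] = u / (4λ)` this is `T[σ]'' = σ − 4λ² T[σ]`, and the identity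
`σ = S[T[σ]] + p` turns it into the claimed equation.
-/

open Set

theorem contDiff_two_of_hasDerivAt {f f' f'' : ℝ → ℝ} (hf : ∀ x, HasDerivAt f (f' x) x)
    (hf' : ∀ x, HasDerivAt f' (f'' x) x) (hf'' : Continuous f'') : ContDiff ℝ 2 f := by
  have hderiv : deriv f = f' := funext fun x => (hf x).deriv
  have hderiv' : deriv f' = f'' := funext fun x => (hf' x).deriv
  rw [show (2 : WithTop ℕ∞) = 1 + 1 from rfl, contDiff_succ_iff_deriv, hderiv,
    contDiff_one_iff_deriv, hderiv']
  exact ⟨fun x => (hf x).differentiableAt, by simp, fun x => (hf' x).differentiableAt, hf''⟩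

section SignedIntegral

variable {g : ℝ → ℝ}

theorem hasDerivAt_integral_Iic (hgi : Integrable g) (hgc : Continuous g) (x : ℝ) :
    HasDerivAt (fun u => ∫ y in Iic u, g y) (g x) x := by
  have hsplit : (fun u => ∫ y in Iic u, g y)
      = fun u => (∫ t in (0 : ℝ)..u, g t) + ∫ y in Iic (0 : ℝ), g y := by
    funext u
    rw [← intervalIntegral.integral_Iic_sub_Iic hgi.integrableOn hgi.integrableOn]
    ring
  rw [hsplit]
  exact (intervalIntegral.integral_hasDerivAt_right hgi.intervalIntegrable
    hgc.aestronglyMeasurable.stronglyMeasurableAtFilter hgc.continuousAt).add_const _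

noncomputable def signedIntegral (g : ℝ → ℝ) (x : ℝ) : ℝ :=
  (∫ y in Iic x, g y) - ∫ y in Ioi x, g y

theorem signedIntegral_eq (hgi : Integrable g) (x : ℝ) :
    signedIntegral g x = 2 * (∫ y in Iic x, g y) - ∫ y, g y := by
  rw [signedIntegral, ← intervalIntegral.integral_Iic_add_Ioi hgi.integrableOn hgi.integrableOn]
  ring

theorem hasDerivAt_signedIntegral (hgi : Integrable g) (hgc : Continuous g) (x : ℝ) :
    HasDerivAt (signedIntegral g) (2 * g x) x := by
  rw [funext (signedIntegral_eq hgi)]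
  exact ((hasDerivAt_integral_Iic hgi hgc x).const_mul 2).sub_const _

end SignedIntegral

section SinConvolution

variable {k : ℝ} {σ : ℝ → ℝ}

noncomputable def sinConv (k : ℝ) (σ : ℝ → ℝ) (x : ℝ) : ℝ :=
  ∫ y, sin (k * |x - y|) * σ y

noncomputable def sinConvDeriv (k : ℝ) (σ : ℝ → ℝ) (x : ℝ) : ℝ :=
  k * (cos (k * x) * signedIntegral (fun y => cos (k * y) * σ y) x
    + sin (k * x) * signedIntegral (fun y => sin (k * y) * σ y) x)

theorem MeasureTheory.Integrable.continuous_mul_of_abs_le_one {h : ℝ → ℝ}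
    (hσ : Integrable σ) (hh : Continuous h) (hbound : ∀ y, |h y| ≤ 1) : Integrable fun y => h y * σ y :=
  hσ.bdd_mul hh.aestronglyMeasurable (c := 1) (.of_forall hbound)

theorem integrable_cos_mul (hσ : Integrable σ) : Integrable fun y => cos (k * y) * σ y :=
  hσ.continuous_mul_of_abs_le_one (by fun_prop) fun _ => abs_cos_le_one _

theorem integrable_sin_mul (hσ : Integrable σ) : Integrable fun y => sin (k * y) * σ y :=
  hσ.continuous_mul_of_abs_le_one (by fun_prop) fun _ => abs_sin_le_one _

theorem sinConv_eq (hσ : Integrable σ) (x : ℝ) :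
    sinConv k σ x = sin (k * x) * signedIntegral (fun y => cos (k * y) * σ y) x
      - cos (k * x) * signedIntegral (fun y => sin (k * y) * σ y) x := by
  have hc := (integrable_cos_mul (k := k) hσ).integrableOn (s := Iic x)
  have hs := (integrable_sin_mul (k := k) hσ).integrableOn (s := Iic x)
  have hc' := (integrable_cos_mul (k := k) hσ).integrableOn (s := Ioi x)
  have hs' := (integrable_sin_mul (k := k) hσ).integrableOn (s := Ioi x)
  have hkernel : Integrable fun y => sin (k * |x - y|) * σ y :=
    hσ.continuous_mul_of_abs_le_one (by fun_prop) fun _ => abs_sin_le_one _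
  have hIic : ∫ y in Iic x, sin (k * |x - y|) * σ y
      = ∫ y in Iic x, (sin (k * x) * (cos (k * y) * σ y) - cos (k * x) * (sin (k * y) * σ y)) :=
    setIntegral_congr_fun measurableSet_Iic fun y hy => by
      rw [abs_of_nonneg (sub_nonneg.mpr hy), mul_sub, sin_sub]
      ring
  have hIoi : ∫ y in Ioi x, sin (k * |x - y|) * σ y
      = ∫ y in Ioi x, (cos (k * x) * (sin (k * y) * σ y) - sin (k * x) * (cos (k * y) * σ y)) :=
    setIntegral_congr_fun measurableSet_Ioi fun y hy => by
      rw [abs_of_neg (sub_neg.mpr hy), neg_sub, mul_sub, sin_sub]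
      ring
  rw [sinConv, ← intervalIntegral.integral_Iic_add_Ioi hkernel.integrableOn hkernel.integrableOn,
    hIic, hIoi, integral_sub (hc.const_mul _) (hs.const_mul _),
    integral_sub (hs'.const_mul _) (hc'.const_mul _), signedIntegral, signedIntegral]
  simp only [integral_const_mul]
  ring

theorem hasDerivAt_sinConv (hσi : Integrable σ) (hσc : Continuous σ) (x : ℝ) :
    HasDerivAt (sinConv k σ) (sinConvDeriv k σ x) x := by
  have ha := hasDerivAt_signedIntegral (integrable_cos_mul (k := k) hσi) (by fun_prop) x
  have hb := hasDerivAt_signedIntegral (integrable_sin_mul (k := k) hσi) (by fun_prop) x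
  have hsin := (hasDerivAt_const_mul (x := x) k).sin
  have hcos := (hasDerivAt_const_mul (x := x) k).cos
  rw [funext (sinConv_eq hσi)]
  refine ((hsin.fun_mul ha).fun_sub (hcos.fun_mul hb)).congr_deriv ?_
  simp only [sinConvDeriv]
  ring

theorem hasDerivAt_sinConvDeriv (hσi : Integrable σ) (hσc : Continuous σ) (x : ℝ) :
    HasDerivAt (sinConvDeriv k σ) (2 * k * σ x - k ^ 2 * sinConv k σ x) x := by
  have ha := hasDerivAt_signedIntegral (integrable_cos_mul (k := k) hσi) (by fun_prop) x
  have hb := hasDerivAt_signedIntegral (integrable_sin_mul (k := k) hσi) (by fun_prop) x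
  have hsin := (hasDerivAt_const_mul (x := x) k).sin
  have hcos := (hasDerivAt_const_mul (x := x) k).cos
  refine (((hcos.fun_mul ha).fun_add (hsin.fun_mul hb)).const_mul k).congr_deriv ?_
  rw [sinConv_eq hσi]
  linear_combination (2 * k * σ x) * sin_sq_add_cos_sq (k * x)

end SinConvolution

theorem stmt_2_general (lam : ℝ) (hlam : 0 < lam) (p : ℝ → ℝ)
    (σ : ℝ → ℝ) (hσi : Integrable σ) (hσc : Continuous σ)
    (hσ : ∀ x : ℝ, σ x = opS lam (opT lam σ) x + p x) :
    ContDiff ℝ 2 (opT lam σ) ∧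
      ∀ x : ℝ,
        deriv (deriv (opT lam σ)) x + 4 * lam ^ 2 * opT lam σ x
          - (deriv (opT lam σ) x) ^ 2 / 4
          + 4 * lam ^ 2 * (Real.exp (opT lam σ x) - 1 - opT lam σ x) = p x := by
  have hT : opT lam σ = fun x => 1 / (4 * lam) * sinConv (2 * lam) σ x := rfl
  have hT' x : HasDerivAt (opT lam σ) (1 / (4 * lam) * sinConvDeriv (2 * lam) σ x) x :=
    hT ▸ (hasDerivAt_sinConv hσi hσc x).const_mul _
  have hT'' x : HasDerivAt (fun x => 1 / (4 * lam) * sinConvDeriv (2 * lam) σ x)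
      (σ x - 4 * lam ^ 2 * opT lam σ x) x := by
    refine ((hasDerivAt_sinConvDeriv hσi hσc x).const_mul _).congr_deriv ?_
    rw [hT]
    field_simp
    ring
  have hTcont : Continuous (opT lam σ) :=
    continuous_iff_continuousAt.mpr fun x => (hT' x).continuousAt
  refine ⟨contDiff_two_of_hasDerivAt hT' hT'' (hσc.sub (continuous_const.mul hTcont)),
    fun x => ?_⟩
  have hδ' : deriv (opT lam σ) = fun x => 1 / (4 * lam) * sinConvDeriv (2 * lam) σ x :=
    funext fun x => (hT' x).deriv
  have hσx := hσ x
  rw [opS, hδ'] at hσx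
  rw [hδ', (hT'' x).deriv]
  linarith

/-- if `σ` is integrable and continuous and `σ = S[T[σ]] + p` on `ℝ`, then
`δ := T[σ]` is twice continuously differentiable and satisfies
`δ″ + 4λ²·δ − (δ′)²/4 + 4λ²·(exp(δ) − 1 − δ) = p` on `ℝ`. -/
theorem stmt_2 (lam : ℝ) (hlam : 0 < lam) (p : ℝ → ℝ) (hp : Continuous p)
    (σ : ℝ → ℝ) (hσi : Integrable σ) (hσc : Continuous σ)
    (hσ : ∀ x : ℝ, σ x = opS lam (opT lam σ) x + p x) :
    ContDiff ℝ 2 (opT lam σ) ∧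
      ∀ x : ℝ,
        deriv (deriv (opT lam σ)) x + 4 * lam ^ 2 * opT lam σ x
          - (deriv (opT lam σ) x) ^ 2 / 4
          + 4 * lam ^ 2 * (Real.exp (opT lam σ x) - 1 - opT lam σ x) = p x :=
  stmt_2_general lam hlam p σ hσi hσc hσ
end

section
/- Let λ > 0, let q, x(t), t(x), P and p be as in the context, and suppose σ : ℝ → ℝ is integrable and continuous with σ(x) = S[T[σ]](x) + p(x) for all x ∈ ℝ. Set δ = T[σ] and define α(t) = λ ∫₀^t √(q(u))·exp(δ(x(u))/2) du. Then α is three times continuously differentiable, α′(t) > 0 for all t, α satisfies Kummer's equation (α′(t))² = λ²q(t) − (1/2)·α‴(t)/α′(t) + (3/4)·(α″(t)/α′(t))² on ℝ, and α is a phase function for the ordinary differential equation y″(t) + λ²q(t)y(t) = 0 on [0,1]. -/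
open MeasureTheory Real Set Topology Filter

/-- `y` is a solution of `y″ + λ²·q·y = 0` on the interval `[0,1]`. -/
def IsSolOn01 (lam : ℝ) (q y : ℝ → ℝ) : Prop :=
  ∃ y₁ y₂ : ℝ → ℝ,
    (∀ t ∈ Icc (0:ℝ) 1, HasDerivWithinAt y (y₁ t) (Icc (0:ℝ) 1) t) ∧
    (∀ t ∈ Icc (0:ℝ) 1, HasDerivWithinAt y₁ (y₂ t) (Icc (0:ℝ) 1) t) ∧
    (∀ t ∈ Icc (0:ℝ) 1, y₂ t + lam ^ 2 * q t * y t = 0)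

/-- `u`, `v` form a basis of the space of solutions of `y″ + λ²·q·y = 0` on `[0,1]`. -/
def IsBasisOn01 (lam : ℝ) (q u v : ℝ → ℝ) : Prop :=
  IsSolOn01 lam q u ∧ IsSolOn01 lam q v ∧
  (∀ c d : ℝ, (∀ t ∈ Icc (0:ℝ) 1, c * u t + d * v t = 0) → c = 0 ∧ d = 0) ∧
  (∀ y : ℝ → ℝ, IsSolOn01 lam q y →
    ∃ c d : ℝ, ∀ t ∈ Icc (0:ℝ) 1, y t = c * u t + d * v t)

/-- `α` is a phase function for `y″ + λ²·q·y = 0` on `[0,1]`: the functions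
`cos(α)/|α′|^{1/2}` and `sin(α)/|α′|^{1/2}` form a basis of the space of solutions. -/
def IsPhaseOn01 (lam : ℝ) (q α : ℝ → ℝ) : Prop :=
  IsBasisOn01 lam q (fun t => Real.cos (α t) / Real.sqrt |deriv α t|)
    (fun t => Real.sin (α t) / Real.sqrt |deriv α t|)


open scoped ContDiff

section aux
variable (lam : ℝ) (σ : ℝ → ℝ)

noncomputable def auxC (x : ℝ) : ℝ := ∫ y in Iic x, Real.cos (2*lam*y) * σ y
noncomputable def auxS (x : ℝ) : ℝ := ∫ y in Iic x, Real.sin (2*lam*y) * σ y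
noncomputable def auxD1 (x : ℝ) : ℝ :=
  (1/2) * (Real.cos (2*lam*x) * (2 * auxC lam σ x - ∫ y : ℝ, Real.cos (2*lam*y) * σ y)
     + Real.sin (2*lam*x) * (2 * auxS lam σ x - ∫ y : ℝ, Real.sin (2*lam*y) * σ y))

variable {lam σ}

theorem intCos (hσi : Integrable σ) : Integrable (fun y => Real.cos (2*lam*y) * σ y) :=
  hσi.bdd_mul (Real.continuous_cos.comp (by continuity)).aestronglyMeasurable
    (c := 1) (Filter.Eventually.of_forall fun x => by simpa using Real.abs_cos_le_one _)

theorem intSin (hσi : Integrable σ) : Integrable (fun y => Real.sin (2*lam*y) * σ y) :=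
  hσi.bdd_mul (Real.continuous_sin.comp (by continuity)).aestronglyMeasurable
    (c := 1) (Filter.Eventually.of_forall fun x => by simpa using Real.abs_sin_le_one _)

theorem opT_eq (hlam : 0 < lam) (hσi : Integrable σ) (x : ℝ) :
    opT lam σ x = (1/(4*lam)) * (Real.sin (2*lam*x) * (2 * auxC lam σ x - ∫ y : ℝ, Real.cos (2*lam*y) * σ y)
      - Real.cos (2*lam*x) * (2 * auxS lam σ x - ∫ y : ℝ, Real.sin (2*lam*y) * σ y)) := by
  have hker : Integrable (fun y => Real.sin (2 * lam * |x - y|) * σ y) :=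
    hσi.bdd_mul (Real.continuous_sin.comp (by continuity)).aestronglyMeasurable
      (c := 1) (Filter.Eventually.of_forall fun x => by simpa using Real.abs_sin_le_one _)
  have hC := intCos (lam := lam) hσi
  have hS := intSin (lam := lam) hσi
  have hsplitC := intervalIntegral.integral_Iic_add_Ioi (μ := volume) (b := x)
    hC.integrableOn hC.integrableOn
  have hsplitS := intervalIntegral.integral_Iic_add_Ioi (μ := volume) (b := x)
    hS.integrableOn hS.integrableOn
  have key : (∫ y : ℝ, Real.sin (2 * lam * |x - y|) * σ y)
      = Real.sin (2*lam*x) * (2 * auxC lam σ x - ∫ y : ℝ, Real.cos (2*lam*y) * σ y)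
        - Real.cos (2*lam*x) * (2 * auxS lam σ x - ∫ y : ℝ, Real.sin (2*lam*y) * σ y) := by
    rw [← intervalIntegral.integral_Iic_add_Ioi (μ := volume) (b := x) hker.integrableOn hker.integrableOn]
    have e1 : (∫ y in Iic x, Real.sin (2 * lam * |x - y|) * σ y)
        = Real.sin (2*lam*x) * auxC lam σ x - Real.cos (2*lam*x) * auxS lam σ x := by
      rw [show (∫ y in Iic x, Real.sin (2 * lam * |x - y|) * σ y)
          = ∫ y in Iic x, (Real.sin (2*lam*x) * (Real.cos (2*lam*y) * σ y)
              - Real.cos (2*lam*x) * (Real.sin (2*lam*y) * σ y)) from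
        setIntegral_congr_fun measurableSet_Iic (fun y hy => by
          rw [abs_of_nonneg (sub_nonneg.2 hy)]
          rw [show 2*lam*(x-y) = 2*lam*x - 2*lam*y by ring, Real.sin_sub]; ring)]
      rw [integral_sub ((hC.integrableOn).const_mul _) ((hS.integrableOn).const_mul _),
        integral_const_mul, integral_const_mul]
      rfl
    have e2 : (∫ y in Ioi x, Real.sin (2 * lam * |x - y|) * σ y)
        = Real.cos (2*lam*x) * ((∫ y : ℝ, Real.sin (2*lam*y) * σ y) - auxS lam σ x)
          - Real.sin (2*lam*x) * ((∫ y : ℝ, Real.cos (2*lam*y) * σ y) - auxC lam σ x) := by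
      rw [show (∫ y in Ioi x, Real.sin (2 * lam * |x - y|) * σ y)
          = ∫ y in Ioi x, (Real.cos (2*lam*x) * (Real.sin (2*lam*y) * σ y)
              - Real.sin (2*lam*x) * (Real.cos (2*lam*y) * σ y)) from
        setIntegral_congr_fun measurableSet_Ioi (fun y hy => by
          rw [abs_of_nonpos (sub_nonpos.2 (le_of_lt hy)), neg_sub]
          rw [show 2*lam*(y-x) = 2*lam*y - 2*lam*x by ring, Real.sin_sub]; ring)]
      rw [integral_sub ((hS.integrableOn).const_mul _) ((hC.integrableOn).const_mul _),
        integral_const_mul, integral_const_mul]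
      have : (∫ y in Ioi x, Real.sin (2*lam*y) * σ y)
          = (∫ y : ℝ, Real.sin (2*lam*y) * σ y) - auxS lam σ x := by
        rw [← hsplitS]; unfold auxS; ring
      have h2 : (∫ y in Ioi x, Real.cos (2*lam*y) * σ y)
          = (∫ y : ℝ, Real.cos (2*lam*y) * σ y) - auxC lam σ x := by
        rw [← hsplitC]; unfold auxC; ring
      rw [this, h2]
    rw [e1, e2]; ring
  unfold opT; rw [key]

theorem hasDerivAt_auxC (hσi : Integrable σ) (hσc : Continuous σ) (x : ℝ) :
    HasDerivAt (auxC lam σ) (Real.cos (2*lam*x) * σ x) x := by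
  have hc : Continuous (fun y => Real.cos (2*lam*y) * σ y) :=
    (Real.continuous_cos.comp (by continuity)).mul hσc
  have heq : auxC lam σ = fun x => (auxC lam σ 0) + ∫ y in (0:ℝ)..x, Real.cos (2*lam*y) * σ y := by
    funext t
    rw [← intervalIntegral.integral_Iic_sub_Iic ((intCos hσi).integrableOn) ((intCos hσi).integrableOn)]
    unfold auxC; ring
  rw [heq]
  exact ((hc.integral_hasStrictDerivAt 0 x).hasDerivAt).const_add _

theorem hasDerivAt_auxS (hσi : Integrable σ) (hσc : Continuous σ) (x : ℝ) :
    HasDerivAt (auxS lam σ) (Real.sin (2*lam*x) * σ x) x := by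
  have hc : Continuous (fun y => Real.sin (2*lam*y) * σ y) :=
    (Real.continuous_sin.comp (by continuity)).mul hσc
  have heq : auxS lam σ = fun x => (auxS lam σ 0) + ∫ y in (0:ℝ)..x, Real.sin (2*lam*y) * σ y := by
    funext t
    rw [← intervalIntegral.integral_Iic_sub_Iic ((intSin hσi).integrableOn) ((intSin hσi).integrableOn)]
    unfold auxS; ring
  rw [heq]
  exact ((hc.integral_hasStrictDerivAt 0 x).hasDerivAt).const_add _

theorem hasDerivAt_lin (lam x : ℝ) : HasDerivAt (fun y : ℝ => 2*lam*y) (2*lam) x := by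
  simpa using (hasDerivAt_id x).const_mul (2*lam)

theorem hasDerivAt_opT (hlam : 0 < lam) (hσi : Integrable σ) (hσc : Continuous σ) (x : ℝ) :
    HasDerivAt (opT lam σ) (auxD1 lam σ x) x := by
  have heq : opT lam σ = fun x => (1/(4*lam)) * (Real.sin (2*lam*x) * (2 * auxC lam σ x - ∫ y : ℝ, Real.cos (2*lam*y) * σ y)
      - Real.cos (2*lam*x) * (2 * auxS lam σ x - ∫ y : ℝ, Real.sin (2*lam*y) * σ y)) :=
    funext (opT_eq hlam hσi)
  rw [heq]
  have hsin : HasDerivAt (fun x => Real.sin (2*lam*x)) (2*lam * Real.cos (2*lam*x)) x := by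
    have h := (Real.hasDerivAt_sin (2*lam*x)).comp x (hasDerivAt_lin lam x)
    simp only [Function.comp_def] at h
    exact h.congr_deriv (by ring)
  have hcos : HasDerivAt (fun x => Real.cos (2*lam*x)) (-(2*lam * Real.sin (2*lam*x))) x := by
    have h := (Real.hasDerivAt_cos (2*lam*x)).comp x (hasDerivAt_lin lam x)
    simp only [Function.comp_def] at h
    exact h.congr_deriv (by ring)
  have h1 : HasDerivAt (fun x => 2 * auxC lam σ x - ∫ y : ℝ, Real.cos (2*lam*y) * σ y)
      (2 * (Real.cos (2*lam*x) * σ x)) x :=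
    ((hasDerivAt_auxC hσi hσc x).const_mul 2).sub_const _
  have h2 : HasDerivAt (fun x => 2 * auxS lam σ x - ∫ y : ℝ, Real.sin (2*lam*y) * σ y)
      (2 * (Real.sin (2*lam*x) * σ x)) x :=
    ((hasDerivAt_auxS hσi hσc x).const_mul 2).sub_const _
  have := (((hsin.mul h1).sub (hcos.mul h2)).const_mul (1/(4*lam)))
  refine this.congr_deriv ?_
  unfold auxD1
  field_simp
  ring

theorem hasDerivAt_auxD1 (hlam : 0 < lam) (hσi : Integrable σ) (hσc : Continuous σ) (x : ℝ) :
    HasDerivAt (auxD1 lam σ) (σ x - 4*lam^2 * opT lam σ x) x := by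
  have hsin : HasDerivAt (fun x => Real.sin (2*lam*x)) (2*lam * Real.cos (2*lam*x)) x := by
    have h := (Real.hasDerivAt_sin (2*lam*x)).comp x (hasDerivAt_lin lam x)
    simp only [Function.comp_def] at h
    exact h.congr_deriv (by ring)
  have hcos : HasDerivAt (fun x => Real.cos (2*lam*x)) (-(2*lam * Real.sin (2*lam*x))) x := by
    have h := (Real.hasDerivAt_cos (2*lam*x)).comp x (hasDerivAt_lin lam x)
    simp only [Function.comp_def] at h
    exact h.congr_deriv (by ring)
  have h1 : HasDerivAt (fun x => 2 * auxC lam σ x - ∫ y : ℝ, Real.cos (2*lam*y) * σ y)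
      (2 * (Real.cos (2*lam*x) * σ x)) x :=
    ((hasDerivAt_auxC hσi hσc x).const_mul 2).sub_const _
  have h2 : HasDerivAt (fun x => 2 * auxS lam σ x - ∫ y : ℝ, Real.sin (2*lam*y) * σ y)
      (2 * (Real.sin (2*lam*x) * σ x)) x :=
    ((hasDerivAt_auxS hσi hσc x).const_mul 2).sub_const _
  have := (((hcos.mul h1).add (hsin.mul h2)).const_mul (1/2:ℝ))
  have h3 : HasDerivAt (auxD1 lam σ)
    ((1/2:ℝ) * ((-(2*lam * Real.sin (2*lam*x)) * (2 * auxC lam σ x - ∫ y : ℝ, Real.cos (2*lam*y) * σ y)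
        + Real.cos (2*lam*x) * (2 * (Real.cos (2*lam*x) * σ x)))
      + (2*lam * Real.cos (2*lam*x) * (2 * auxS lam σ x - ∫ y : ℝ, Real.sin (2*lam*y) * σ y)
        + Real.sin (2*lam*x) * (2 * (Real.sin (2*lam*x) * σ x))))) x := by
    unfold auxD1; exact this
  convert h3 using 1
  rw [opT_eq hlam hσi]
  have hpy := Real.sin_sq_add_cos_sq (2*lam*x)
  field_simp
  have hpy2 := Real.sin_sq_add_cos_sq (lam*2*x)
  linear_combination (-σ x) * hpy2
end aux


set_option maxHeartbeats 2000000 in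
/-- with `q` smooth and strictly positive, `x(t) = ∫₀ᵗ √q`, a bijection of ℝ
with inverse `t(x)`, `p(x) = P(t(x))` where `P = (1/q)((5/4)(q′/q)² − q″/q)`, and `σ`
integrable and continuous with `σ = S[T[σ]] + p`, the function
`α(t) = λ∫₀ᵗ √(q(u))·exp(T[σ](x(u))/2) du` is three times continuously differentiable,
has `α′ > 0` everywhere, satisfies Kummer's equation on `ℝ`, and is a phase function for
`y″ + λ²·q·y = 0` on `[0,1]`. -/
theorem stmt_3 (lam : ℝ) (hlam : 0 < lam)
    (q : ℝ → ℝ) (hq : ContDiff ℝ (⊤ : ℕ∞) q) (hqpos : ∀ t : ℝ, 0 < q t)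
    (X : ℝ → ℝ) (hX : ∀ t : ℝ, X t = ∫ u in (0:ℝ)..t, Real.sqrt (q u))
    (tInv : ℝ → ℝ) (htInv1 : Function.LeftInverse tInv X)
    (htInv2 : Function.RightInverse tInv X)
    (p : ℝ → ℝ)
    (hp : ∀ x : ℝ, p x = (1 / q (tInv x)) *
      ((5 / 4) * (deriv q (tInv x) / q (tInv x)) ^ 2
        - deriv (deriv q) (tInv x) / q (tInv x)))
    (σ : ℝ → ℝ) (hσi : Integrable σ) (hσc : Continuous σ)
    (hσ : ∀ x : ℝ, σ x = opS lam (opT lam σ) x + p x)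
    (α : ℝ → ℝ)
    (hα : ∀ t : ℝ, α t = lam * ∫ u in (0:ℝ)..t,
      Real.sqrt (q u) * Real.exp (opT lam σ (X u) / 2)) :
    ContDiff ℝ 3 α ∧
    (∀ t : ℝ, 0 < deriv α t) ∧
    (∀ t : ℝ, (deriv α t) ^ 2 =
      lam ^ 2 * q t - (1 / 2) * (deriv (deriv (deriv α)) t / deriv α t)
        + (3 / 4) * (deriv (deriv α) t / deriv α t) ^ 2) ∧
    IsPhaseOn01 lam q α := by
  classical
  have hlam' : lam ≠ 0 := ne_of_gt hlam
  have hd1 : ∀ x, HasDerivAt (opT lam σ) (auxD1 lam σ x) x :=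
    fun x => hasDerivAt_opT hlam hσi hσc x
  have hd2 : ∀ x, HasDerivAt (auxD1 lam σ) (σ x - 4*lam^2 * opT lam σ x) x :=
    fun x => hasDerivAt_auxD1 hlam hσi hσc x
  set δ : ℝ → ℝ := opT lam σ with hδdef
  set δ₁ : ℝ → ℝ := auxD1 lam σ with hδ1def
  have hderivδ : deriv δ = δ₁ := funext fun x => (hd1 x).deriv
  have hδdiff : Differentiable ℝ δ := fun x => (hd1 x).differentiableAt
  have hδ₁diff : Differentiable ℝ δ₁ := fun x => (hd2 x).differentiableAt
  have hRic : ∀ x, σ x - 4*lam^2*δ x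
      = δ₁ x^2/4 - 4*lam^2*Real.exp (δ x) + 4*lam^2 + p x := by
    intro x
    have h := hσ x
    rw [opS, hderivδ] at h
    linear_combination h
  -- q facts
  have hqd : Differentiable ℝ q := hq.differentiable (by simp)
  have hq1 : ContDiff ℝ ∞ (deriv q) := (contDiff_infty_iff_deriv.1 (hq.of_le (by simp))).2
  have hqd2 : Differentiable ℝ (deriv q) := hq1.differentiable (by simp)
  have hsqI : ContDiff ℝ ∞ (fun t => Real.sqrt (q t)) :=
    contDiff_iff_contDiffAt.2 fun t => ContDiffAt.sqrt (hq.of_le (by simp)).contDiffAt (hqpos t).ne'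
  have hsqpos : ∀ t, 0 < Real.sqrt (q t) := fun t => Real.sqrt_pos.2 (hqpos t)
  have hsqder : ∀ t, HasDerivAt (fun u => Real.sqrt (q u)) (deriv q t / (2*Real.sqrt (q t))) t := by
    intro t
    have h := (Real.hasDerivAt_sqrt (hqpos t).ne').comp t (hqd t).hasDerivAt
    simp only [Function.comp_def] at h
    exact h.congr_deriv (by ring)
  -- X facts
  have hXeq : X = fun t => ∫ u in (0:ℝ)..t, Real.sqrt (q u) := funext hX
  have hXd : ∀ t, HasDerivAt X (Real.sqrt (q t)) t := fun t => by
    rw [hXeq]; exact (hsqI.continuous.integral_hasStrictDerivAt 0 t).hasDerivAt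
  have hXI : ContDiff ℝ ∞ X := contDiff_infty_iff_deriv.2 ⟨fun t => (hXd t).differentiableAt, by
    rw [show deriv X = fun t => Real.sqrt (q t) from funext fun t => (hXd t).deriv]; exact hsqI⟩
  -- δ is C²
  have hδC2 : ContDiff ℝ 2 δ := by
    rw [show (2 : WithTop ℕ∞) = 1 + 1 by norm_num, contDiff_succ_iff_deriv]
    refine ⟨hδdiff, by simp, ?_⟩
    rw [hderivδ]
    exact contDiff_one_iff_deriv.2 ⟨hδ₁diff, by
      rw [show deriv δ₁ = fun x => σ x - 4*lam^2*δ x from funext fun x => (hd2 x).deriv]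
      exact hσc.sub (continuous_const.mul hδdiff.continuous)⟩
  -- g and α
  set g : ℝ → ℝ := fun t => Real.sqrt (q t) * Real.exp (δ (X t) / 2) with hgdef
  have h2top : (2 : WithTop ℕ∞) ≤ ∞ := by norm_cast
  have hgC2 : ContDiff ℝ 2 g :=
    (hsqI.of_le h2top).mul (Real.contDiff_exp.comp ((hδC2.comp (hXI.of_le h2top)).div_const 2))
  have hαfun : α = fun t => lam * ∫ u in (0:ℝ)..t, g u := funext hα
  have hαd : ∀ t, HasDerivAt α (lam * g t) t := fun t => by
    rw [hαfun]; exact ((hgC2.continuous.integral_hasStrictDerivAt 0 t).hasDerivAt).const_mul lam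
  have hderivα : deriv α = fun t => lam * g t := funext fun t => (hαd t).deriv
  have hαpos : ∀ t, 0 < deriv α t := fun t => by
    rw [hderivα]
    exact mul_pos hlam (mul_pos (hsqpos t) (Real.exp_pos _))
  have hαC3 : ContDiff ℝ 3 α := by
    rw [show (3 : WithTop ℕ∞) = 2 + 1 by norm_num, contDiff_succ_iff_deriv]
    exact ⟨fun t => (hαd t).differentiableAt, by simp, by rw [hderivα]; exact contDiff_const.mul hgC2⟩
  -- second derivative
  have hφd : ∀ t, HasDerivAt (fun u => δ (X u)) (δ₁ (X t) * Real.sqrt (q t)) t := fun t => by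
    have h := (hd1 (X t)).comp t (hXd t)
    simpa [Function.comp_def] using h
  have hexpd : ∀ t, HasDerivAt (fun u => Real.exp (δ (X u)/2))
      (Real.exp (δ (X t)/2) * (δ₁ (X t) * Real.sqrt (q t) / 2)) t := fun t => by
    have h := (Real.hasDerivAt_exp (δ (X t)/2)).comp t ((hφd t).div_const 2)
    simpa [Function.comp_def] using h
  have hgd : ∀ t, HasDerivAt g
      (deriv q t / (2*Real.sqrt (q t)) * Real.exp (δ (X t)/2)
        + Real.sqrt (q t) * (Real.exp (δ (X t)/2) * (δ₁ (X t) * Real.sqrt (q t) / 2))) t :=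
    fun t => (hsqder t).mul (hexpd t)
  set A2 : ℝ → ℝ := fun t => lam * (deriv q t / (2*Real.sqrt (q t)) * Real.exp (δ (X t)/2)
        + Real.sqrt (q t) * (Real.exp (δ (X t)/2) * (δ₁ (X t) * Real.sqrt (q t) / 2))) with hA2def
  have hA2d : ∀ t, HasDerivAt (deriv α) (A2 t) t := fun t => by
    rw [hderivα]; exact (hgd t).const_mul lam
  have hderiv2 : deriv (deriv α) = A2 := funext fun t => (hA2d t).deriv
  -- third derivative
  have hf1d : ∀ t, HasDerivAt (fun u => deriv q u / (2*Real.sqrt (q u)))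
      ((deriv (deriv q) t * (2*Real.sqrt (q t)) - deriv q t * (2*(deriv q t / (2*Real.sqrt (q t)))))
        / (2*Real.sqrt (q t))^2) t := fun t =>
    ((hqd2 t).hasDerivAt).div ((hsqder t).const_mul 2) (mul_pos two_pos (hsqpos t)).ne'
  have hf4d : ∀ t, HasDerivAt (fun u => δ₁ (X u))
      ((σ (X t) - 4*lam^2 * δ (X t)) * Real.sqrt (q t)) t := fun t => by
    have h := (hd2 (X t)).comp t (hXd t)
    simpa [Function.comp_def] using h
  set E : ℝ → ℝ := fun t => lam *
      ((deriv (deriv q) t * (2*Real.sqrt (q t)) - deriv q t * (2*(deriv q t / (2*Real.sqrt (q t)))))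
          / (2*Real.sqrt (q t))^2 * Real.exp (δ (X t)/2)
        + deriv q t / (2*Real.sqrt (q t)) * (Real.exp (δ (X t)/2) * (δ₁ (X t) * Real.sqrt (q t) / 2))
        + (deriv q t / (2*Real.sqrt (q t)) * (Real.exp (δ (X t)/2) * (δ₁ (X t) * Real.sqrt (q t) / 2))
          + Real.sqrt (q t) * (Real.exp (δ (X t)/2) * (δ₁ (X t) * Real.sqrt (q t) / 2)
              * (δ₁ (X t) * Real.sqrt (q t) / 2)
            + Real.exp (δ (X t)/2) * (((σ (X t) - 4*lam^2 * δ (X t)) * Real.sqrt (q t) * Real.sqrt (q t)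
              + δ₁ (X t) * (deriv q t / (2*Real.sqrt (q t)))) / 2)))) with hEdef
  have hA3d : ∀ t, HasDerivAt A2 (E t) t := fun t =>
    (((hf1d t).mul (hexpd t)).add
      ((hsqder t).mul ((hexpd t).mul (((hf4d t).mul (hsqder t)).div_const 2)))).const_mul lam
  have hderiv3 : deriv (deriv (deriv α)) = E := by
    rw [show deriv (deriv α) = A2 from hderiv2]
    exact funext fun t => (hA3d t).deriv
  -- Kummer
  have hKum : ∀ t, (lam * g t)^2 = lam^2 * q t - (1/2) * (E t / (lam * g t))
      + (3/4) * (A2 t / (lam * g t))^2 := by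
    intro t
    have hRt := hRic (X t)
    have hpt : p (X t) = 1 / q t * (5/4*(deriv q t / q t)^2 - deriv (deriv q) t / q t) := by
      rw [hp (X t), htInv1 t]
    rw [hpt] at hRt
    simp only [hEdef, hA2def, hgdef]
    rw [hRt]
    have hee : Real.exp (δ (X t)/2) * Real.exp (δ (X t)/2) = Real.exp (δ (X t)) := by
      rw [← Real.exp_add]; norm_num
    rw [← hee]
    set s : ℝ := Real.sqrt (q t) with hsdef
    set e : ℝ := Real.exp (δ (X t)/2) with hedef
    have hs2 : s^2 = q t := Real.sq_sqrt (hqpos t).le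
    have hsne : s ≠ 0 := (hsqpos t).ne'
    have hene : e ≠ 0 := (Real.exp_pos _).ne'
    rw [← hs2]
    set D1 : ℝ := δ₁ (X t) with hD1def
    set Q1 : ℝ := deriv q t with hQ1def
    set Q2 : ℝ := deriv (deriv q) t with hQ2def
    field_simp
    ring
  refine ⟨hαC3, hαpos, fun t => by
    rw [hderiv3, hderiv2, hderivα]; exact hKum t, ?_⟩
  
  -- Phase function part
  have ha_eq : ∀ t, deriv α t = lam * g t := fun t => by rw [hderivα]
  have hKum' : ∀ t, (deriv α t)^2 = lam^2 * q t - (1/2) * (E t / deriv α t)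
      + (3/4) * (A2 t / deriv α t)^2 := fun t => by rw [ha_eq t]; exact hKum t
  have hsane : ∀ t, Real.sqrt (deriv α t) ≠ 0 := fun t => (Real.sqrt_pos.2 (hαpos t)).ne'
  have hsa2 : ∀ t, Real.sqrt (deriv α t)^2 = deriv α t := fun t => Real.sq_sqrt (hαpos t).le
  set u : ℝ → ℝ := fun t => Real.cos (α t) / Real.sqrt (deriv α t) with hudef
  set v : ℝ → ℝ := fun t => Real.sin (α t) / Real.sqrt (deriv α t) with hvdef
  have hαd' : ∀ t, HasDerivAt α (deriv α t) t := fun t => by rw [ha_eq t]; exact hαd t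
  have hA2d' : ∀ t, HasDerivAt (deriv α) (A2 t) t := hA2d
  have hsad : ∀ t, HasDerivAt (fun s => Real.sqrt (deriv α s))
      (A2 t / (2 * Real.sqrt (deriv α t))) t := fun t => by
    have h := (Real.hasDerivAt_sqrt (hαpos t).ne').comp t (hA2d t)
    simp only [Function.comp_def] at h
    exact h.congr_deriv (by ring)
  have hsinαd : ∀ t, HasDerivAt (fun s => Real.sin (α s)) (Real.cos (α t) * deriv α t) t :=
    fun t => by
      have h := (Real.hasDerivAt_sin (α t)).comp t (hαd' t)
      simpa [Function.comp_def] using h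
  have hcosαd : ∀ t, HasDerivAt (fun s => Real.cos (α s)) (-Real.sin (α t) * deriv α t) t :=
    fun t => by
      have h := (Real.hasDerivAt_cos (α t)).comp t (hαd' t)
      simpa [Function.comp_def] using h
  set U1 : ℝ → ℝ := fun t => (-Real.sin (α t) * deriv α t * Real.sqrt (deriv α t)
      - Real.cos (α t) * (A2 t / (2 * Real.sqrt (deriv α t)))) / Real.sqrt (deriv α t) ^ 2
    with hU1def
  set V1 : ℝ → ℝ := fun t => (Real.cos (α t) * deriv α t * Real.sqrt (deriv α t)
      - Real.sin (α t) * (A2 t / (2 * Real.sqrt (deriv α t)))) / Real.sqrt (deriv α t) ^ 2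
    with hV1def
  have hU1d : ∀ t, HasDerivAt u (U1 t) t := fun t => (hcosαd t).div (hsad t) (hsane t)
  have hV1d : ∀ t, HasDerivAt v (V1 t) t := fun t => (hsinαd t).div (hsad t) (hsane t)
  have hEt : ∀ t, E t = 2 * deriv α t * (lam^2 * q t) - 2 * (deriv α t)^3
      + (3/2) * (A2 t)^2 / deriv α t := by
    intro t
    have h := hKum' t
    have hane := (hαpos t).ne'
    have h' : E t / deriv α t = 2 * (lam^2 * q t) - 2 * (deriv α t)^2
        + (3/2) * (A2 t / deriv α t)^2 := by linarith [h]
    rw [(div_eq_iff hane).1 h']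
    field_simp
  -- second derivative of u, with the ODE identity
  have hU2d : ∀ t, ∃ dd, HasDerivAt U1 dd t ∧ dd + lam^2 * q t * u t = 0 := by
    intro t
    have h2sane : (2 : ℝ) * Real.sqrt (deriv α t) ≠ 0 :=
      (mul_pos two_pos (Real.sqrt_pos.2 (hαpos t))).ne'
    have hnum : HasDerivAt (fun s => -Real.sin (α s) * deriv α s * Real.sqrt (deriv α s)
        - Real.cos (α s) * (A2 s / (2 * Real.sqrt (deriv α s)))) _ t :=
      ((((hsinαd t).neg.mul (hA2d t)).mul (hsad t)).sub
        ((hcosαd t).mul ((hA3d t).div ((hsad t).const_mul 2) h2sane)))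
    have hden : HasDerivAt (fun s => Real.sqrt (deriv α s) ^ 2) _ t := (hsad t).pow 2
    refine ⟨_, hnum.div hden (pow_ne_zero 2 (hsane t)), ?_⟩
    simp only [hudef]
    rw [hEt t]
    have h2' := hsa2 t
    have hno1 := hsane t
    have hno2 := (hsqpos t).ne'
    have hno3 := Real.exp_ne_zero (δ (X t)/2)
    set sa : ℝ := Real.sqrt (deriv α t) with hsadef
    simp only [Pi.mul_apply, Pi.neg_apply]
    rw [← h2']
    push_cast
    field_simp [hno1, hno2, hno3]
    ring
  have hV2d : ∀ t, ∃ dd, HasDerivAt V1 dd t ∧ dd + lam^2 * q t * v t = 0 := by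
    intro t
    have h2sane : (2 : ℝ) * Real.sqrt (deriv α t) ≠ 0 :=
      (mul_pos two_pos (Real.sqrt_pos.2 (hαpos t))).ne'
    have hnum : HasDerivAt (fun s => Real.cos (α s) * deriv α s * Real.sqrt (deriv α s)
        - Real.sin (α s) * (A2 s / (2 * Real.sqrt (deriv α s)))) _ t :=
      ((((hcosαd t).mul (hA2d t)).mul (hsad t)).sub
        ((hsinαd t).mul ((hA3d t).div ((hsad t).const_mul 2) h2sane)))
    have hden : HasDerivAt (fun s => Real.sqrt (deriv α s) ^ 2) _ t := (hsad t).pow 2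
    refine ⟨_, hnum.div hden (pow_ne_zero 2 (hsane t)), ?_⟩
    simp only [hvdef]
    rw [hEt t]
    have h2' := hsa2 t
    have hno1 := hsane t
    have hno2 := (hsqpos t).ne'
    have hno3 := Real.exp_ne_zero (δ (X t)/2)
    set sa : ℝ := Real.sqrt (deriv α t) with hsadef
    simp only [Pi.mul_apply, Pi.neg_apply]
    rw [← h2']
    push_cast
    field_simp [hno1, hno2, hno3]
    ring
  have huSol : IsSolOn01 lam q u := by
    refine ⟨U1, fun t => -(lam^2 * q t * u t), fun t _ => (hU1d t).hasDerivWithinAt,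
      fun t _ => ?_, fun t _ => by ring⟩
    obtain ⟨dd, hdd, hz⟩ := hU2d t
    show HasDerivWithinAt U1 (-(lam^2 * q t * u t)) (Icc (0:ℝ) 1) t
    rw [show -(lam^2 * q t * u t) = dd by linarith]
    exact hdd.hasDerivWithinAt
  have hvSol : IsSolOn01 lam q v := by
    refine ⟨V1, fun t => -(lam^2 * q t * v t), fun t _ => (hV1d t).hasDerivWithinAt,
      fun t _ => ?_, fun t _ => by ring⟩
    obtain ⟨dd, hdd, hz⟩ := hV2d t
    show HasDerivWithinAt V1 (-(lam^2 * q t * v t)) (Icc (0:ℝ) 1) t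
    rw [show -(lam^2 * q t * v t) = dd by linarith]
    exact hdd.hasDerivWithinAt
  -- linear independence
  have hindep : ∀ c d : ℝ, (∀ t ∈ Icc (0:ℝ) 1, c * u t + d * v t = 0) → c = 0 ∧ d = 0 := by
    intro c d hcd
    have hzero : ∀ t ∈ Icc (0:ℝ) 1, c * Real.cos (α t) + d * Real.sin (α t) = 0 := by
      intro t ht
      have h := hcd t ht
      simp only [hudef, hvdef] at h
      have h' : (c * Real.cos (α t) + d * Real.sin (α t)) / Real.sqrt (deriv α t) = 0 := by
        rw [← h]; ring
      exact (div_eq_zero_iff.mp h').resolve_right (hsane t)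
    have hh0d : ∀ t, HasDerivAt (fun s => c * Real.cos (α s) + d * Real.sin (α s))
        (c * (-Real.sin (α t) * deriv α t) + d * (Real.cos (α t) * deriv α t)) t :=
      fun t => ((hcosαd t).const_mul c).add ((hsinαd t).const_mul d)
    have hmem : Icc (0:ℝ) 1 ∈ 𝓝 ((1:ℝ)/2) := Icc_mem_nhds (by norm_num) (by norm_num)
    have hev : (fun s => c * Real.cos (α s) + d * Real.sin (α s)) =ᶠ[nhds ((1:ℝ)/2)]
        (fun _ => (0:ℝ)) := Filter.eventuallyEq_of_mem hmem (fun t ht => hzero t ht)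
    have hder0 : c * (-Real.sin (α ((1:ℝ)/2)) * deriv α ((1:ℝ)/2))
        + d * (Real.cos (α ((1:ℝ)/2)) * deriv α ((1:ℝ)/2)) = 0 := by
      rw [← (hh0d ((1:ℝ)/2)).deriv, hev.deriv_eq]
      simp
    have h2 : -c * Real.sin (α ((1:ℝ)/2)) + d * Real.cos (α ((1:ℝ)/2)) = 0 := by
      have := mul_eq_zero.mp (show (-c * Real.sin (α ((1:ℝ)/2)) + d * Real.cos (α ((1:ℝ)/2)))
          * deriv α ((1:ℝ)/2) = 0 by linear_combination hder0)
      exact this.resolve_right (hαpos ((1:ℝ)/2)).ne'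
    have h1 : c * Real.cos (α ((1:ℝ)/2)) + d * Real.sin (α ((1:ℝ)/2)) = 0 :=
      hzero ((1:ℝ)/2) (by norm_num)
    have hpy := Real.sin_sq_add_cos_sq (α ((1:ℝ)/2))
    constructor
    · linear_combination Real.cos (α ((1:ℝ)/2)) * h1 - Real.sin (α ((1:ℝ)/2)) * h2 - c * hpy
    · linear_combination Real.sin (α ((1:ℝ)/2)) * h1 + Real.cos (α ((1:ℝ)/2)) * h2 - d * hpy
  -- spanning
  have hspan : ∀ y : ℝ → ℝ, IsSolOn01 lam q y →
      ∃ c d : ℝ, ∀ t ∈ Icc (0:ℝ) 1, y t = c * u t + d * v t := by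
    rintro y ⟨y₁, y₂, hy1, hy2, hy3⟩
    have hα0 : α 0 = 0 := by rw [hα 0, intervalIntegral.integral_same, mul_zero]
    have hu0 : u 0 = 1 / Real.sqrt (deriv α 0) := by
      simp only [hudef]; rw [hα0, Real.cos_zero]
    have hv0 : v 0 = 0 := by
      simp only [hvdef]; rw [hα0, Real.sin_zero, zero_div]
    have hV10 : V1 0 = Real.sqrt (deriv α 0) := by
      simp only [hV1def]; rw [hα0, Real.sin_zero, Real.cos_zero, hsa2 0]
      field_simp [(hαpos 0).ne']
      rw [div_eq_iff (hsane 0)]; ring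
    set c : ℝ := y 0 * Real.sqrt (deriv α 0) with hc
    set d : ℝ := (y₁ 0 - c * U1 0) / Real.sqrt (deriv α 0) with hd
    -- bound for Lipschitz constant
    obtain ⟨M, hM⟩ := isCompact_Icc.exists_bound_of_continuousOn
      ((continuous_const.mul hq.continuous).continuousOn :
        ContinuousOn (fun t => lam^2 * q t) (Icc (0:ℝ) 1))
    set cl : ℝ → ℝ := fun t => max 0 (min 1 t) with hcl
    have hclmem : ∀ t, cl t ∈ Icc (0:ℝ) 1 := fun t =>
      ⟨le_max_left _ _, max_le zero_le_one (min_le_left _ _)⟩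
    have hcleq : ∀ t ∈ Icc (0:ℝ) 1, cl t = t := fun t ht => by
      simp only [hcl]; rw [min_eq_right ht.2, max_eq_right ht.1]
    set K : NNReal := ⟨max 1 M, le_trans zero_le_one (le_max_left 1 M)⟩ with hK
    set V : ℝ → ℝ × ℝ → ℝ × ℝ := fun t z => (z.2, -(lam^2 * q (cl t)) * z.1) with hVdef
    have hlip : ∀ t, LipschitzWith K (V t) := by
      intro t
      apply LipschitzWith.of_dist_le_mul
      intro z w
      have habs : |lam^2 * q (cl t)| ≤ M := by
        have := hM (cl t) (hclmem t)
        rwa [Real.norm_eq_abs] at this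
      have hd2 : dist (V t z) (V t w) = max (dist z.2 w.2) (|lam^2 * q (cl t)| * |z.1 - w.1|) := by
        rw [Prod.dist_eq]
        congr 1
        rw [Real.dist_eq, show -(lam^2 * q (cl t)) * z.1 - -(lam^2 * q (cl t)) * w.1
          = -(lam^2 * q (cl t)) * (z.1 - w.1) by ring, abs_mul, abs_neg]
      rw [hd2, Prod.dist_eq]
      have hKcoe : (K : ℝ) = max 1 M := rfl
      rw [hKcoe]
      have hd1 : dist z.1 w.1 = |z.1 - w.1| := Real.dist_eq _ _
      apply max_le
      · calc dist z.2 w.2 ≤ max (dist z.1 w.1) (dist z.2 w.2) := le_max_right _ _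
          _ ≤ max 1 M * max (dist z.1 w.1) (dist z.2 w.2) :=
            le_mul_of_one_le_left (le_max_iff.2 (Or.inl dist_nonneg)) (le_max_left 1 M)
      · calc |lam^2 * q (cl t)| * |z.1 - w.1| ≤ M * |z.1 - w.1| :=
              mul_le_mul_of_nonneg_right habs (abs_nonneg _)
          _ ≤ max 1 M * max (dist z.1 w.1) (dist z.2 w.2) := by
              apply mul_le_mul (le_max_right 1 M) _ (abs_nonneg _)
                (le_trans zero_le_one (le_max_left 1 M))
              rw [← hd1]; exact le_max_left _ _
    set F : ℝ → ℝ × ℝ := fun t => (y t, y₁ t) with hF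
    set G : ℝ → ℝ × ℝ := fun t => (c * u t + d * v t, c * U1 t + d * V1 t) with hG
    have hFc : ContinuousOn F (Icc (0:ℝ) 1) := fun t ht =>
      ((hy1 t ht).continuousWithinAt).prodMk ((hy2 t ht).continuousWithinAt)
    have hucont : Continuous u :=
      Differentiable.continuous (fun t => (hU1d t).differentiableAt)
    have hvcont : Continuous v :=
      Differentiable.continuous (fun t => (hV1d t).differentiableAt)
    have hU1cont : Continuous U1 :=
      Differentiable.continuous (fun t => ((hU2d t).choose_spec.1).differentiableAt)
    have hV1cont : Continuous V1 :=
      Differentiable.continuous (fun t => ((hV2d t).choose_spec.1).differentiableAt)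
    have hGc : ContinuousOn G (Icc (0:ℝ) 1) := (Continuous.continuousOn (by
      exact ((continuous_const.mul hucont).add (continuous_const.mul hvcont)).prodMk
        (((continuous_const.mul hU1cont).add (continuous_const.mul hV1cont)))))
    have hF' : ∀ t ∈ Ico (0:ℝ) 1, HasDerivWithinAt F (V t (F t)) (Ici t) t := by
      intro t ht
      have htIcc : t ∈ Icc (0:ℝ) 1 := ⟨ht.1, ht.2.le⟩
      have hmem : Icc (0:ℝ) 1 ∈ nhdsWithin t (Ici t) :=
        mem_nhdsWithin.mpr ⟨Iio 1, isOpen_Iio, ht.2, fun x hx => ⟨le_trans ht.1 hx.2, hx.1.le⟩⟩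
      have hdF := ((hy1 t htIcc).prodMk (hy2 t htIcc)).mono_of_mem_nhdsWithin hmem
      have hVF : V t (F t) = (y₁ t, y₂ t) := by
        simp only [hVdef, hF]
        rw [hcleq t htIcc]
        have h3 := hy3 t htIcc
        exact congrArg (Prod.mk (y₁ t)) (by linarith)
      rw [hVF]; exact hdF
    have hG' : ∀ t ∈ Ico (0:ℝ) 1, HasDerivWithinAt G (V t (G t)) (Ici t) t := by
      intro t ht
      have htIcc : t ∈ Icc (0:ℝ) 1 := ⟨ht.1, ht.2.le⟩
      obtain ⟨du, hdu, hu0'⟩ := hU2d t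
      obtain ⟨dv, hdv, hv0'⟩ := hV2d t
      have hdG : HasDerivAt G (c * U1 t + d * V1 t, c * du + d * dv) t :=
        (((hU1d t).const_mul c).add ((hV1d t).const_mul d)).prodMk
          (((hdu.const_mul c).add (hdv.const_mul d)))
      have hVG : V t (G t) = (c * U1 t + d * V1 t, c * du + d * dv) := by
        simp only [hVdef, hG]
        rw [hcleq t htIcc]
        exact congrArg (Prod.mk (c * U1 t + d * V1 t)) (by
          linear_combination (-c) * hu0' + (-d) * hv0')
      rw [hVG]; exact hdG.hasDerivWithinAt
    have hinit : F 0 = G 0 := by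
      simp only [hF, hG]
      have h1 : y 0 = c * u 0 + d * v 0 := by
        rw [hu0, hv0, hc]; field_simp
        rw [mul_div_assoc, div_self (hsane 0), mul_one]
        ring
      have h2 : y₁ 0 = c * U1 0 + d * V1 0 := by
        rw [hV10, hd]; field_simp
        rw [mul_div_assoc, div_self (hsane 0), mul_one]
        ring
      rw [← h1, ← h2]
    have key := ODE_solution_unique hlip hFc hF' hGc hG' hinit
    exact ⟨c, d, fun t ht => congrArg Prod.fst (key ht)⟩
  -- assemble
  have hufun : (fun t => Real.cos (α t) / Real.sqrt |deriv α t|) = u := by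
    funext t; rw [abs_of_pos (hαpos t)]
  have hvfun : (fun t => Real.sin (α t) / Real.sqrt |deriv α t|) = v := by
    funext t; rw [abs_of_pos (hαpos t)]
  rw [IsPhaseOn01, hufun, hvfun]
  exact ⟨huSol, hvSol, hindep, hspan⟩
end

section
/- For every integer m ≥ 1 and every real t > 0, K_{m−1/2}(t) ≤ (√π/2)·(t/2)^{1/2−m}·e^{−t}·Γ((1+t)/2 + m − 1)/Γ((1+t)/2), where Γ denotes the Gamma function. -/
/-!
Integrating by parts against `d/ds exp(-t cosh s) = -t sinh s · exp(-t cosh s)` gives the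
recurrence `K_{ν+1}(t) = K_{ν-1}(t) + (2ν/t) K_ν(t)`. Since `K_ν(t)` is increasing in `|ν|`,
`K_{ν-1} ≤ K_ν` for `ν ≥ 1/2`, so `K_{ν+1}(t) ≤ (1 + 2ν/t) K_ν(t)`. Starting from the closed
form `K_{1/2}(t) = √(π/(2t)) e^{-t}` and iterating over `ν = 1/2, 3/2, …`, the factors
`1 + (2k+1)/t = (2/t)((1+t)/2 + k)` multiply to `(2/t)^n Γ((1+t)/2 + n) / Γ((1+t)/2)`.
-/

open MeasureTheory Real Set

noncomputable def besselK (ν t : ℝ) : ℝ :=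
  ∫ s in Ioi (0 : ℝ), Real.exp (-(t * Real.cosh s)) * Real.cosh (ν * s)

namespace Real

lemma cosh_le_exp_abs (x : ℝ) : cosh x ≤ exp |x| := by
  rw [← cosh_abs, ← cosh_add_sinh |x|]
  exact le_add_of_nonneg_right (sinh_nonneg_iff.mpr (abs_nonneg x))

lemma abs_sinh_le_exp_abs (x : ℝ) : |sinh x| ≤ exp |x| := by
  rw [abs_sinh, ← cosh_add_sinh |x|]
  exact le_add_of_nonneg_left (one_le_cosh _ |>.trans' zero_le_one)

lemma sq_div_four_le_cosh {x : ℝ} (hx : 0 ≤ x) : x ^ 2 / 4 ≤ cosh x := by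
  nlinarith [quadratic_le_exp_of_nonneg hx, exp_pos (-x), cosh_eq x]

lemma cosh_eq_one_add_two_mul_sinh_sq (x : ℝ) : cosh x = 1 + 2 * sinh (x / 2) ^ 2 := by
  have h := cosh_two_mul (x / 2)
  rw [mul_div_cancel₀ x two_ne_zero, cosh_sq] at h
  linarith

end Real

lemma integrable_exp_neg_mul_sq_add_mul {b : ℝ} (hb : 0 < b) (c : ℝ) :
    Integrable fun x : ℝ => exp (-b * x ^ 2 + c * x) := by
  refine (integrable_cexp_quadratic (b := (b : ℂ)) (by simpa using hb) c 0).norm.congr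
    (.of_forall fun x => ?_)
  simp only [Complex.norm_exp]
  norm_cast
  simp

lemma integrableOn_exp_neg_mul_cosh_mul {t c : ℝ} (ht : 0 < t) {g : ℝ → ℝ}
    (hg : AEStronglyMeasurable g (volume.restrict (Ioi 0)))
    (hbound : ∀ s > 0, |g s| ≤ exp (c * s)) :
    IntegrableOn (fun s => exp (-(t * cosh s)) * g s) (Ioi 0) := by
  refine (integrable_exp_neg_mul_sq_add_mul (by positivity : 0 < t / 4) c).integrableOn.mono'
    ((by fun_prop : Continuous fun s => exp (-(t * cosh s))).aestronglyMeasurable.mul hg) ?_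
  filter_upwards [ae_restrict_mem measurableSet_Ioi] with s (hs : 0 < s)
  have hdecay : exp (-(t * cosh s)) ≤ exp (-(t / 4) * s ^ 2) :=
    exp_le_exp.mpr (by nlinarith [Real.sq_div_four_le_cosh hs.le])
  calc ‖exp (-(t * cosh s)) * g s‖ = exp (-(t * cosh s)) * |g s| := by
        rw [norm_mul, norm_of_nonneg (exp_pos _).le, norm_eq_abs]
    _ ≤ exp (-(t / 4) * s ^ 2) * exp (c * s) :=
        mul_le_mul hdecay (hbound s hs) (abs_nonneg _) (exp_pos _).le
    _ = exp (-(t / 4) * s ^ 2 + c * s) := (exp_add _ _).symm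

lemma abs_cosh_mul_le {ν s : ℝ} (hs : 0 ≤ s) : |cosh (ν * s)| ≤ exp (|ν| * s) := by
  simpa [abs_of_pos (cosh_pos _), abs_mul, abs_of_nonneg hs] using Real.cosh_le_exp_abs (ν * s)

lemma abs_sinh_mul_le {ν s : ℝ} (hs : 0 ≤ s) : |sinh (ν * s)| ≤ exp (|ν| * s) := by
  simpa [abs_mul, abs_of_nonneg hs] using Real.abs_sinh_le_exp_abs (ν * s)

lemma integrableOn_besselK_integrand {t : ℝ} (ht : 0 < t) (ν : ℝ) :
    IntegrableOn (fun s => exp (-(t * cosh s)) * cosh (ν * s)) (Ioi 0) :=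
  integrableOn_exp_neg_mul_cosh_mul ht (by fun_prop) fun _ hs => abs_cosh_mul_le hs.le

lemma integrableOn_exp_neg_mul_cosh_mul_sinh_mul {t : ℝ} (ht : 0 < t) (ν : ℝ) :
    IntegrableOn (fun s => exp (-(t * cosh s)) * sinh (ν * s)) (Ioi 0) :=
  integrableOn_exp_neg_mul_cosh_mul ht (by fun_prop) fun _ hs => abs_sinh_mul_le hs.le

lemma integrableOn_exp_neg_mul_cosh_mul_sinh_mul_sinh {t : ℝ} (ht : 0 < t) (ν : ℝ) :
    IntegrableOn (fun s => exp (-(t * cosh s)) * (sinh (ν * s) * sinh s)) (Ioi 0) := by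
  refine integrableOn_exp_neg_mul_cosh_mul (c := |ν| + 1) ht (by fun_prop) fun s hs => ?_
  rw [abs_mul, add_mul, one_mul, exp_add]
  have h1 : |sinh s| ≤ exp s := by simpa using abs_sinh_mul_le (ν := 1) hs.le
  exact mul_le_mul (abs_sinh_mul_le hs.le) h1 (abs_nonneg _) (exp_pos _).le

lemma mul_integral_sinh_mul_sinh_eq_mul_besselK {t : ℝ} (ht : 0 < t) (ν : ℝ) :
    t * ∫ s in Ioi (0 : ℝ), exp (-(t * cosh s)) * (sinh (ν * s) * sinh s) =
      ν * besselK ν t := by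
  set F' : ℝ → ℝ := fun s => ν * (exp (-(t * cosh s)) * cosh (ν * s)) -
    t * (exp (-(t * cosh s)) * (sinh (ν * s) * sinh s))
  have hderiv (s : ℝ) : HasDerivAt (fun s => exp (-(t * cosh s)) * sinh (ν * s)) (F' s) s := by
    have h := (((hasDerivAt_cosh s).const_mul t).neg.exp).mul
      ((hasDerivAt_sinh (ν * s)).comp s ((hasDerivAt_id s).const_mul ν))
    refine h.congr_deriv ?_
    simp only [F', Function.comp_apply, Pi.neg_apply]
    ring
  have hF'int : IntegrableOn F' (Ioi 0) :=
    ((integrableOn_besselK_integrand ht ν).const_mul ν).sub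
      ((integrableOn_exp_neg_mul_cosh_mul_sinh_mul_sinh ht ν).const_mul t)
  have hlim := tendsto_zero_of_hasDerivAt_of_integrableOn_Ioi (fun s _ => hderiv s) hF'int
    (integrableOn_exp_neg_mul_cosh_mul_sinh_mul ht ν)
  have hFTC := integral_Ioi_of_hasDerivAt_of_tendsto' (fun s _ => hderiv s) hF'int hlim
  rw [integral_sub ((integrableOn_besselK_integrand ht ν).const_mul ν)
    ((integrableOn_exp_neg_mul_cosh_mul_sinh_mul_sinh ht ν).const_mul t),
    integral_const_mul, integral_const_mul] at hFTC
  simp only [mul_zero, sinh_zero, sub_zero] at hFTC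
  rw [besselK]
  linarith

lemma besselK_add_one {t : ℝ} (ht : 0 < t) (ν : ℝ) :
    besselK (ν + 1) t = besselK (ν - 1) t + 2 * ν / t * besselK ν t := by
  have hdiff : besselK (ν + 1) t - besselK (ν - 1) t =
      2 * ∫ s in Ioi (0 : ℝ), exp (-(t * cosh s)) * (sinh (ν * s) * sinh s) := by
    rw [besselK, besselK, ← integral_sub (integrableOn_besselK_integrand ht _)
      (integrableOn_besselK_integrand ht _), ← integral_const_mul]
    congr 1 with s
    rw [add_mul, sub_mul, one_mul, cosh_add, cosh_sub]
    ring
  have hparts := mul_integral_sinh_mul_sinh_eq_mul_besselK ht ν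
  set I := ∫ s in Ioi (0 : ℝ), exp (-(t * cosh s)) * (sinh (ν * s) * sinh s)
  rw [sub_eq_iff_eq_add'.mp hdiff, mul_div_right_comm, mul_assoc, ← hparts]
  field_simp

lemma besselK_le_besselK {t : ℝ} (ht : 0 < t) {μ ν : ℝ} (h : |μ| ≤ |ν|) :
    besselK μ t ≤ besselK ν t := by
  refine setIntegral_mono (integrableOn_besselK_integrand ht μ)
    (integrableOn_besselK_integrand ht ν) fun s => ?_
  gcongr
  rw [cosh_le_cosh, abs_mul, abs_mul]
  gcongr

lemma besselK_add_one_le {t ν : ℝ} (ht : 0 < t) (hν : 1 / 2 ≤ ν) :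
    besselK (ν + 1) t ≤ (1 + 2 * ν / t) * besselK ν t := by
  have hmono : besselK (ν - 1) t ≤ besselK ν t := by
    refine besselK_le_besselK ht ?_
    rw [abs_of_nonneg (by linarith : 0 ≤ ν)]
    exact abs_le.mpr ⟨by linarith, by linarith⟩
  rw [besselK_add_one ht]
  linarith

-- For `t ≤ 0` both sides are junk zeros: the integrand is not integrable and `√` of a
-- nonpositive number is `0`.
lemma besselK_one_half (t : ℝ) :
    besselK (1 / 2) t = √(π / (2 * t)) * exp (-t) := by
  set f : ℝ → ℝ := fun s => sinh (s / 2)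
  have hf' : ∀ s ∈ Ioi (0 : ℝ), HasDerivWithinAt f (cosh (s / 2) / 2) (Ioi 0) s := fun s _ =>
    (((hasDerivAt_id' s).div_const 2).sinh.congr_deriv (mul_one_div _ _)).hasDerivWithinAt
  have hf_inj : InjOn f (Ioi 0) := fun a _ b _ h => by
    simpa using sinh_injective h
  have hf_image : f '' Ioi 0 = Ioi 0 := by
    ext u
    constructor
    · rintro ⟨s, hs, rfl⟩
      exact sinh_pos_iff.mpr (half_pos hs)
    · intro hu
      exact ⟨2 * arsinh u, by simpa using arsinh_pos_iff.mpr hu, by simp [f]⟩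
  have hsubst := integral_image_eq_integral_abs_deriv_smul measurableSet_Ioi hf' hf_inj
    fun u => 2 * exp (-t) * exp (-(2 * t) * u ^ 2)
  rw [hf_image, integral_const_mul, integral_gaussian_Ioi] at hsubst
  rw [besselK]
  convert hsubst.symm using 1
  · refine setIntegral_congr_fun measurableSet_Ioi fun s _ => ?_
    rw [smul_eq_mul, abs_of_pos (by positivity), cosh_eq_one_add_two_mul_sinh_sq s,
      show -(t * (1 + 2 * sinh (s / 2) ^ 2)) = -t + -(2 * t) * sinh (s / 2) ^ 2 by ring, exp_add,
      one_div_mul_eq_div]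
    ring
  · ring

lemma sqrt_pi_div_two_mul_rpow {t : ℝ} (ht : 0 < t) (n : ℕ) :
    √π / 2 * (t / 2) ^ ((1 : ℝ) / 2 - (n + 1 : ℕ)) = √(π / (2 * t)) * (2 / t) ^ n := by
  have hsqrt : √(t / 2) * √(2 * t) = t := by
    rw [← sqrt_mul (by positivity), show t / 2 * (2 * t) = t * t by ring, sqrt_mul_self ht.le]
  rw [rpow_sub (by positivity), rpow_natCast, ← sqrt_eq_rpow,
    sqrt_div' _ (by positivity : (0 : ℝ) ≤ 2 * t), ← inv_div t 2, inv_pow]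
  field_simp
  rw [hsqrt]
  ring

lemma besselK_nat_add_half_le {t : ℝ} (ht : 0 < t) (n : ℕ) :
    besselK (n + 1 / 2) t ≤
      besselK (1 / 2) t * ((2 / t) ^ n * Gamma ((1 + t) / 2 + n) / Gamma ((1 + t) / 2)) := by
  induction n with
  | zero =>
    have hΓ : Gamma ((1 + t) / 2) ≠ 0 := (Gamma_pos_of_pos (by positivity)).ne'
    simp [hΓ]
  | succ n ih =>
    have hΓ : Gamma ((1 + t) / 2 + (n + 1)) = ((1 + t) / 2 + n) * Gamma ((1 + t) / 2 + n) := by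
      rw [← add_assoc, Gamma_add_one (by positivity)]
    calc besselK ((n + 1 : ℕ) + 1 / 2) t = besselK ((n + 1 / 2) + 1) t := by push_cast; ring_nf
      _ ≤ (1 + 2 * (n + 1 / 2) / t) * besselK (n + 1 / 2) t :=
        besselK_add_one_le ht (by linarith [n.cast_nonneg (α := ℝ)])
      _ ≤ (1 + 2 * (n + 1 / 2) / t) *
          (besselK (1 / 2) t * ((2 / t) ^ n * Gamma ((1 + t) / 2 + n) / Gamma ((1 + t) / 2))) :=
        mul_le_mul_of_nonneg_left ih (by positivity)
      _ = _ := by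
        push_cast
        rw [hΓ, pow_succ]
        field_simp
        ring

/-- for every integer `m ≥ 1` and every real `t > 0`,
`K_{m−1/2}(t) ≤ (√π/2)·(t/2)^{1/2−m}·e^{−t}·Γ((1+t)/2 + m − 1)/Γ((1+t)/2)`. -/
theorem stmt_10 :
    ∀ m : ℕ, 1 ≤ m → ∀ t : ℝ, 0 < t →
      besselK ((m : ℝ) - 1 / 2) t ≤
        (Real.sqrt Real.pi / 2) * (t / 2) ^ ((1 : ℝ) / 2 - (m : ℝ)) * Real.exp (-t) *
          Real.Gamma ((1 + t) / 2 + m - 1) / Real.Gamma ((1 + t) / 2) := by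
  intro m hm t ht
  obtain ⟨n, rfl⟩ := Nat.exists_eq_add_of_le' hm
  convert besselK_nat_add_half_le ht n using 1
  · push_cast
    ring_nf
  · rw [besselK_one_half, mul_right_comm _ (exp (-t)), sqrt_pi_div_two_mul_rpow ht]
    push_cast
    ring_nf
end
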